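/- arXiv:1902.02674 — 7 statements merged into one kernel-verified Lean document; each statement's English description precedes it below -/
import Mathlib

section
/- Let $S$ be a right LCM monoid with core $S_c$ and core equivalence $\sim$ (where $s \sim t$ iff $sa = tb$ for some $a,b \in S_c$). Fix $a, b \in S_c$ and $s \in S$ with $[as] = [bs]$. If there exist $s' \in S$ with $s' \sim s$ and $c \in S_c$ such that $as'c = bs'c$, then there exists $d \in S_c$ such that $asd = bsd$. (That is, the property of absorbing the difference between $a$ and $b$ is invariant under core equivalence.) -/
/-- The principal right ideal `sS`. -/
def rIdeal {S : Type*} [Monoid S] (s : S) : Set S := {z | ∃ x, z = s * x}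

/-- `S` is left cancellative. -/
def LeftCanc (S : Type*) [Monoid S] : Prop := ∀ a b c : S, a * b = a * c → b = c

/-- `s` and `t` admit a right common multiple. -/
def Cap {S : Type*} [Monoid S] (s t : S) : Prop := (rIdeal s ∩ rIdeal t).Nonempty

/-- Any two elements with a right common multiple have a right LCM. -/
def IsRightLCM (S : Type*) [Monoid S] : Prop :=
  ∀ s t : S, Cap s t → ∃ r : S, rIdeal s ∩ rIdeal t = rIdeal r

/-- The core `S_c` of a monoid. -/
def core (S : Type*) [Monoid S] : Set S := {a | ∀ s : S, Cap a s}

/-- Core equivalence: `s ∼ t` iff `s a = t b` for some `a, b` in the core. -/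
def coreEquiv {S : Type*} [Monoid S] (s t : S) : Prop :=
  ∃ a ∈ core S, ∃ b ∈ core S, s * a = t * b


/-!
Write `s' * u = s * v` with `u, v` in the core. Since `c` is in the core, `u` and `c` have a
right LCM `u * y = c * x`, and left cancellation forces the cofactor `y` into the core. Then
`d = v * y` is in the core and `s * d = s' * c * x`, so `d` absorbs the difference as `c` does.
-/

section RightLCM

variable {S : Type*} [Monoid S]

theorem self_mem_rIdeal (s : S) : s ∈ rIdeal s := ⟨1, (mul_one s).symm⟩

theorem mul_mem_core {u v : S} (hu : u ∈ core S) (hv : v ∈ core S) : u * v ∈ core S := by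
  intro t
  obtain ⟨_, ⟨p, hp⟩, ⟨q, hq⟩⟩ := hu t
  obtain ⟨_, ⟨m, hm⟩, ⟨n, hn⟩⟩ := hv p
  refine ⟨u * v * m, ⟨m, rfl⟩, ⟨q * n, ?_⟩⟩
  rw [mul_assoc u, ← hm, hn, ← mul_assoc, ← hp, hq, mul_assoc]

theorem mem_core_of_rIdeal_inter_eq (hlc : LeftCanc S) {u c y : S} (hc : c ∈ core S)
    (hr : rIdeal u ∩ rIdeal c = rIdeal (u * y)) : y ∈ core S := by
  intro t
  -- a common multiple `c * p = u * t * q` of `c` and `u * t` is a multiple of the LCM `u * y`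
  obtain ⟨z, ⟨p, hp⟩, ⟨q, hq⟩⟩ := hc (u * t)
  have hz : z ∈ rIdeal u ∩ rIdeal c := ⟨⟨t * q, by rw [hq, mul_assoc]⟩, ⟨p, hp⟩⟩
  obtain ⟨m, hm⟩ := hr ▸ hz
  have hcanc : u * (y * m) = u * (t * q) := by rw [← mul_assoc, ← hm, hq, mul_assoc]
  exact ⟨y * m, ⟨m, rfl⟩, ⟨q, hlc u _ _ hcanc⟩⟩

theorem exists_mem_core_mul_eq (hlc : LeftCanc S) (hlcm : IsRightLCM S) (u : S) {c : S}
    (hc : c ∈ core S) : ∃ y ∈ core S, ∃ x, u * y = c * x := by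
  obtain ⟨r, hr⟩ := hlcm c u (hc u)
  obtain ⟨⟨x, hx⟩, ⟨y, hy⟩⟩ := hr ▸ self_mem_rIdeal r
  rw [Set.inter_comm, hy] at hr
  exact ⟨y, mem_core_of_rIdeal_inter_eq hlc hc hr, x, hy.symm.trans hx⟩

end RightLCM

theorem absorbing_invariant_general (S : Type*) [Monoid S] (hlc : LeftCanc S)
    (hlcm : IsRightLCM S) (a b : S) (s : S)
    (s' : S) (hs' : coreEquiv s' s) (c : S) (hc : c ∈ core S)
    (habs : a * s' * c = b * s' * c) :
    ∃ d ∈ core S, a * s * d = b * s * d := by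
  obtain ⟨u, hu, v, hv, huv⟩ := hs'
  obtain ⟨y, hy, x, hyx⟩ := exists_mem_core_mul_eq hlc hlcm u hc
  have hsd : s * (v * y) = s' * c * x := by
    rw [← mul_assoc, ← huv, mul_assoc, hyx, mul_assoc]
  refine ⟨v * y, mul_mem_core hv hy, ?_⟩
  calc a * s * (v * y) = a * s' * c * x := by rw [mul_assoc a s, hsd]; simp only [mul_assoc]
    _ = b * s' * c * x := by rw [habs]
    _ = b * s * (v * y) := by rw [mul_assoc b s, hsd]; simp only [mul_assoc]

/-- Absorbing the difference between `a` and `b` is invariant under core equivalence. -/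
theorem absorbing_invariant (S : Type*) [Monoid S] (hlc : LeftCanc S)
    (hlcm : IsRightLCM S) (a b : S) (ha : a ∈ core S) (hb : b ∈ core S) (s : S)
    (hfix : coreEquiv (a * s) (b * s))
    (s' : S) (hs' : coreEquiv s' s) (c : S) (hc : c ∈ core S)
    (habs : a * s' * c = b * s' * c) :
    ∃ d ∈ core S, a * s * d = b * s * d :=
  absorbing_invariant_general S hlc hlcm a b s s' hs' c hc habs
end

section
/- Let $S$ be a right LCM monoid with generalised scale $N$ that is right cancellative, and suppose there exist $a, b \in S_c$ with $a \neq b$ such that $\alpha_a = \alpha_b$ as maps on $S/_\sim$ (i.e., $[as] = [bs]$ for all $s \in S$). Then $S$ is not core regular; in fact $|F_n^{a,b} \setminus A_n^{a,b}| = n$ for every $n \in N(S)$. -/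
/-- The core equivalence class of `s` inside `N⁻¹(N s)`. -/
def classOf {S : Type*} [Monoid S] (N : S → ℕ) (s : S) : Set S :=
  {t | N t = N s ∧ coreEquiv s t}

/-- The set of core equivalence classes of elements of `N⁻¹(n)`. -/
def classSet {S : Type*} [Monoid S] (N : S → ℕ) (n : ℕ) : Set (Set S) :=
  {C | ∃ s, N s = n ∧ C = classOf N s}

/-- `T` is a transversal for `N⁻¹(n)/∼`. -/
def IsTransversal {S : Type*} [Monoid S] (N : S → ℕ) (n : ℕ) (T : Finset S) : Prop :=
  (∀ t ∈ T, N t = n) ∧ ∀ s : S, N s = n → ∃! t, t ∈ T ∧ coreEquiv s t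

/-- `T` is an accurate foundation set. -/
def IsAccurateFoundationSet {S : Type*} [Monoid S] (T : Finset S) : Prop :=
  (∀ s : S, ∃ f ∈ T, Cap s f) ∧ ∀ f ∈ T, ∀ f' ∈ T, f ≠ f' → ¬ Cap f f'

/-- A generalised scale on a right LCM monoid. -/
def IsGenScale {S : Type*} [Monoid S] (N : S →* ℕ) : Prop :=
  (∀ s, 0 < N s) ∧ (∃ s, N s ≠ 1) ∧
  (∀ n ∈ Set.range ⇑N, (classSet ⇑N n).ncard = n) ∧
  (∀ n ∈ Set.range ⇑N, ∀ T : Finset S, IsTransversal ⇑N n T → IsAccurateFoundationSet T)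

/-- `[s]` is an absorbing fixed point for the pair `(a,b)`: `a s c = b s c` for some core `c`. -/
def Absorbing {S : Type*} [Monoid S] (a b s : S) : Prop :=
  ∃ c ∈ core S, a * s * c = b * s * c

/-- `[s]` is a fixed point for the pair `(a,b)`: `a s c = b s d` for some core `c, d`. -/
def FixedBy {S : Type*} [Monoid S] (a b s : S) : Prop :=
  ∃ c ∈ core S, ∃ d ∈ core S, a * s * c = b * s * d

/-- The set `A_n^{a,b}` of absorbing classes at level `n`. -/
def Aset {S : Type*} [Monoid S] (N : S → ℕ) (a b : S) (n : ℕ) : Set (Set S) :=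
  {C | ∃ s, N s = n ∧ Absorbing a b s ∧ C = classOf N s}

/-- The set `F_n^{a,b}` of fixed classes at level `n`. -/
def Fset {S : Type*} [Monoid S] (N : S → ℕ) (a b : S) (n : ℕ) : Set (Set S) :=
  {C | ∃ s, N s = n ∧ FixedBy a b s ∧ C = classOf N s}

/-! Since `a ≠ b`, right cancellation forbids `a s c = b s c`, so no class is absorbing; since
`α_a = α_b`, every class is fixed. Hence `F_n^{a,b} \ A_n^{a,b}` is the whole of `N⁻¹(n)/∼`,
which has `n` elements, and the ratio in the definition of core regularity is constantly `1`. -/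

section FixedClasses

variable {S : Type*} [Monoid S]

theorem eq_of_absorbing (hrc : ∀ s t u : S, s * u = t * u → s = t) {a b s : S}
    (h : Absorbing a b s) : a = b := by
  obtain ⟨c, -, hc⟩ := h
  exact hrc a b s (hrc (a * s) (b * s) c hc)

theorem Aset_eq_empty (hrc : ∀ s t u : S, s * u = t * u → s = t) (N : S → ℕ) {a b : S}
    (hab : a ≠ b) (n : ℕ) : Aset N a b n = ∅ :=
  Set.eq_empty_iff_forall_notMem.2 fun _ ⟨_, _, habs, _⟩ => hab (eq_of_absorbing hrc habs)

theorem Fset_eq_classSet (N : S → ℕ) {a b : S} (halpha : ∀ s : S, coreEquiv (a * s) (b * s))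
    (n : ℕ) : Fset N a b n = classSet N n := by
  ext C
  constructor
  · rintro ⟨s, hs, -, rfl⟩
    exact ⟨s, hs, rfl⟩
  · rintro ⟨s, hs, rfl⟩
    exact ⟨s, hs, halpha s, rfl⟩

end FixedClasses

theorem not_tendsto_div_self_atTop_zero {ι : Type*} [Preorder ι] [Nonempty ι]
    [IsDirected ι (· ≤ ·)] {f g : ι → ℕ} (hfg : ∀ i, f i = g i) (hg : ∀ i, 0 < g i) :
    ¬ Filter.Tendsto (fun i => (f i : ℝ) / g i) Filter.atTop (nhds 0) := by
  have hone : (fun i => (f i : ℝ) / g i) = fun _ => 1 := by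
    funext i
    rw [hfg i]
    exact div_self (Nat.cast_ne_zero.2 (hg i).ne')
  rw [hone]
  intro h
  exact one_ne_zero (tendsto_nhds_unique tendsto_const_nhds h)

theorem not_core_regular_general (S : Type*) [Monoid S]
    (hrc : ∀ s t u : S, s * u = t * u → s = t)
    (N : S →* ℕ) (hN : IsGenScale N) (a b : S)
    (hab : a ≠ b) (halpha : ∀ s : S, coreEquiv (a * s) (b * s)) :
    (∀ n ∈ Set.range ⇑N, (Fset ⇑N a b n \ Aset ⇑N a b n).ncard = n) ∧
    ¬ Filter.Tendsto
        (fun n : {n : ℕ // n ∈ Set.range ⇑N} =>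
          (((Fset ⇑N a b ↑n \ Aset ⇑N a b ↑n).ncard : ℝ) / (n : ℕ)))
        Filter.atTop (nhds 0) := by
  have hcard : ∀ n ∈ Set.range ⇑N, (Fset ⇑N a b n \ Aset ⇑N a b n).ncard = n := by
    intro n hn
    rw [Fset_eq_classSet _ halpha, Aset_eq_empty hrc _ hab, Set.sdiff_empty]
    exact hN.2.2.1 n hn
  have : Nonempty {n : ℕ // n ∈ Set.range ⇑N} := ⟨⟨N 1, 1, rfl⟩⟩
  refine ⟨hcard, not_tendsto_div_self_atTop_zero (fun n => hcard n n.2) ?_⟩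
  rintro ⟨_, s, rfl⟩
  exact hN.1 s

/-- If `S` is right cancellative and `α_a = α_b` for distinct core elements `a ≠ b`, then
`|F_n^{a,b} \ A_n^{a,b}| = n` for every `n ∈ N(S)`; in particular `S` is not core regular. -/
theorem not_core_regular (S : Type*) [Monoid S] (hlc : LeftCanc S)
    (hlcm : IsRightLCM S) (hrc : ∀ s t u : S, s * u = t * u → s = t)
    (N : S →* ℕ) (hN : IsGenScale N) (a b : S) (ha : a ∈ core S) (hb : b ∈ core S)
    (hab : a ≠ b) (halpha : ∀ s : S, coreEquiv (a * s) (b * s)) :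
    (∀ n ∈ Set.range ⇑N, (Fset ⇑N a b n \ Aset ⇑N a b n).ncard = n) ∧
    ¬ Filter.Tendsto
        (fun n : {n : ℕ // n ∈ Set.range ⇑N} =>
          (((Fset ⇑N a b ↑n \ Aset ⇑N a b ↑n).ncard : ℝ) / (n : ℕ)))
        Filter.atTop (nhds 0) :=
  not_core_regular_general S hrc N hN a b hab halpha
end

section
/- Let $(G,X)$ be a faithful self-similar group action and $S = X^* \bowtie G$ the associated Zappa–Szép product monoid, whose core is $S_c = \{\varnothing\} \times G$. For $g \in G$ and a word $w \in X^*$ of length $\ell$, set $n = |X|^\ell$. Then: (a) $[(w, 1_G)] \in F_n^{(\varnothing,g),(\varnothing,1_G)}$ if and only if $g(w) = w$; and (b) $[(w, 1_G)] \in A_n^{(\varnothing,g),(\varnothing,1_G)}$ if and only if $g(w) = w$ and $g|_w = 1_G$. -/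
/-- A faithful self-similar action of a group `G` on the free monoid over `X`. -/
structure SelfSimilarAction (G : Type*) [Group G] (X : Type*) where
  act : G → List X → List X
  res : G → List X → G
  act_one : ∀ w, act 1 w = w
  res_one : ∀ w, res 1 w = 1
  act_mul : ∀ g h w, act (g * h) w = act g (act h w)
  res_mul : ∀ g h w, res (g * h) w = res g (act h w) * res h w
  act_nil : ∀ g, act g [] = []
  res_nil : ∀ g, res g [] = g
  act_append : ∀ g v w, act g (v ++ w) = act g v ++ act (res g v) w
  res_append : ∀ g v w, res g (v ++ w) = res (res g v) w
  length_act : ∀ g w, (act g w).length = w.length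
  faithful : ∀ g, (∀ w, act g w = w) → g = 1

/-- Multiplication in the Zappa–Szép product `X* ⋈ G`: `(v,g)(w,h) = (v g(w), g|_w h)`. -/
def zsMul {G X : Type*} [Group G] (A : SelfSimilarAction G X)
    (p q : List X × G) : List X × G :=
  (p.1 ++ A.act p.2 q.1, A.res p.2 q.1 * q.2)

namespace SelfSimilarAction

variable {G X : Type*} [Group G] (A : SelfSimilarAction G X)

@[simp]
lemma zsMul_nil_left (g : G) (q : List X × G) :
    zsMul A ([], g) q = (A.act g q.1, A.res g q.1 * q.2) :=
  rfl

@[simp]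
lemma zsMul_nil_right (p : List X × G) (c : G) : zsMul A p ([], c) = (p.1, p.2 * c) := by
  simp only [zsMul, A.act_nil, A.res_nil, List.append_nil]

end SelfSimilarAction

theorem ssa_fixed_absorbing_general (G X : Type*) [Group G]
    (A : SelfSimilarAction G X) (g : G) (w : List X) :
    ((∃ c d : G, zsMul A (zsMul A ([], g) (w, 1)) ([], c)
        = zsMul A (zsMul A ([], (1 : G)) (w, 1)) ([], d)) ↔ A.act g w = w) ∧
    ((∃ c : G, zsMul A (zsMul A ([], g) (w, 1)) ([], c)
        = zsMul A (zsMul A ([], (1 : G)) (w, 1)) ([], c)) ↔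
      A.act g w = w ∧ A.res g w = 1) := by
  simp only [SelfSimilarAction.zsMul_nil_left, SelfSimilarAction.zsMul_nil_right, A.act_one,
    A.res_one, mul_one, one_mul, Prod.mk.injEq, mul_eq_right]
  exact ⟨⟨fun ⟨_, _, hw, _⟩ => hw, fun hw => ⟨1, A.res g w, hw, mul_one _⟩⟩,
    ⟨fun ⟨_, hw, hres⟩ => ⟨hw, hres⟩, fun hw => ⟨1, hw⟩⟩⟩

/-- For `S = X* ⋈ G` with core `{∅} × G`: `[(w,1)] ∈ F_n^{(∅,g),(∅,1)}` iff `g(w) = w`, and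
`[(w,1)] ∈ A_n^{(∅,g),(∅,1)}` iff `g(w) = w` and `g|_w = 1`, where `n = |X|^{ℓ(w)}`. -/
theorem ssa_fixed_absorbing (G X : Type*) [Group G] [Fintype X]
    (A : SelfSimilarAction G X) (g : G) (w : List X)
    (n : ℕ) (hn : n = Fintype.card X ^ w.length) :
    ((∃ c d : G, zsMul A (zsMul A ([], g) (w, 1)) ([], c)
        = zsMul A (zsMul A ([], (1 : G)) (w, 1)) ([], d)) ↔ A.act g w = w) ∧
    ((∃ c : G, zsMul A (zsMul A ([], g) (w, 1)) ([], c)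
        = zsMul A (zsMul A ([], (1 : G)) (w, 1)) ([], c)) ↔
      A.act g w = w ∧ A.res g w = 1) :=
  ssa_fixed_absorbing_general G X A g w
end

section
/- Let $\phi \colon H \to G$ be an injective virtual endomorphism of a group $G$ (i.e., $H \leq G$ has finite index and $\phi$ is an injective homomorphism), let $D = \{q_x \mid x \in X\}$ be a transversal for the left cosets $G/H$, and let $(G,X)$ be the associated self-similar action defined by: for $g \in G$, $x \in X$, $g(x) = y$ where $y$ is the unique letter with $gq_x \in q_yH$, and $g|_x = \phi(q_y^{-1} g q_x)$. Then there is no $g \in G \setminus \{1_G\}$ and $x \in X$ with $g(x) = x$ and $g|_x = 1_G$; consequently, there is no $g \neq 1_G$ and nonempty word $w \in X^*$ with $g(w) = w$ and $g|_w = 1_G$, and the monoid $X^* \bowtie G$ is right cancellative. -/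
/-- The action on words induced by a letter-level self-similar action. -/
def actW {G X : Type*} (actL : G → X → X) (resL : G → X → G) : G → List X → List X
  | _, [] => []
  | g, x :: w => actL g x :: actW actL resL (resL g x) w

/-- The restriction (cocycle) on words induced by a letter-level self-similar action. -/
def resW {G X : Type*} (actL : G → X → X) (resL : G → X → G) : G → List X → G
  | g, [] => g
  | g, x :: w => resW actL resL (resL g x) w

/-- Zappa–Szép multiplication `(v,g)(w,h) = (v g(w), g|_w h)` on `List X × G`. -/
def zsMulW {G X : Type*} [Group G] (actL : G → X → X) (resL : G → X → G)
    (p q : List X × G) : List X × G :=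
  (p.1 ++ actW actL resL p.2 q.1, resW actL resL p.2 q.1 * q.2)

/-!
Since `g|_x = φ (q_{g(x)}⁻¹ g q_x)` and `φ` is injective, the pair `(g(x), g|_x)` determines
`g q_x`, hence `g`. Induction along a word shows that `(g(w), g|_w)` determines `g` as well, and
right cancellation in `X* ⋈ G` reduces to exactly this, because `g(w)` has the length of `w`.
-/

section SelfSimilar

variable {G X : Type*} {actL : G → X → X} {resL : G → X → G}

theorem length_actW (g : G) (w : List X) : (actW actL resL g w).length = w.length := by
  induction w generalizing g with
  | nil => rfl
  | cons x w ih => simp [actW, ih]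

theorem eq_of_actW_eq_of_resW_eq
    (hL : ∀ g g' x, actL g x = actL g' x → resL g x = resL g' x → g = g')
    {g g' : G} (w : List X) (hact : actW actL resL g w = actW actL resL g' w)
    (hres : resW actL resL g w = resW actL resL g' w) : g = g' := by
  induction w generalizing g g' with
  | nil => exact hres
  | cons x w ih =>
    obtain ⟨hx, hw⟩ := List.cons_eq_cons.mp hact
    exact hL g g' x hx (ih hw hres)

theorem eq_one_of_actW_eq_self_of_resW_eq_one [One G]
    (hL : ∀ g x, actL g x = x → resL g x = 1 → g = 1)
    {g : G} {w : List X} (hw : w ≠ []) (hact : actW actL resL g w = w)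
    (hres : resW actL resL g w = 1) : g = 1 := by
  induction w generalizing g with
  | nil => exact absurd rfl hw
  | cons x w ih =>
    obtain ⟨hx, hw'⟩ := List.cons_eq_cons.mp hact
    have hres_x : resL g x = 1 := by
      rcases eq_or_ne w [] with rfl | hne
      · exact hres
      · exact ih hne hw' hres
    exact hL g x hx hres_x

theorem zsMulW_right_cancel [Group G]
    (hL : ∀ g g' x, actL g x = actL g' x → resL g x = resL g' x → g = g')
    {s t u : List X × G} (h : zsMulW actL resL s u = zsMulW actL resL t u) : s = t := by
  obtain ⟨v, g⟩ := s
  obtain ⟨v', g'⟩ := t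
  obtain ⟨w, k⟩ := u
  simp only [zsMulW, Prod.mk.injEq] at h
  obtain ⟨hword, hgrp⟩ := h
  have hlen : v.length = v'.length := by
    simpa [length_actW] using congrArg List.length hword
  obtain ⟨rfl, hact⟩ := List.append_inj hword hlen
  rw [eq_of_actW_eq_of_resW_eq hL w hact (mul_right_cancel hgrp)]

end SelfSimilar

section VirtualEndomorphism

variable {G X : Type*} [Group G] {H : Subgroup G} {φ : H →* G}
  {q : X → G} {actL : G → X → X} {resL : G → X → G}

theorem eq_of_actL_eq_of_resL_eq (hφ : Function.Injective φ)
    (hact : ∀ g x, (q (actL g x))⁻¹ * (g * q x) ∈ H)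
    (hres : ∀ g x, resL g x = φ ⟨(q (actL g x))⁻¹ * (g * q x), hact g x⟩)
    (g g' : G) (x : X) (hx : actL g x = actL g' x) (hrx : resL g x = resL g' x) : g = g' := by
  rw [hres, hres] at hrx
  have h := congrArg Subtype.val (hφ hrx)
  simp only [hx, mul_left_cancel_iff] at h
  exact mul_right_cancel h

theorem eq_one_of_actL_eq_self_of_resL_eq_one (hφ : Function.Injective φ)
    (hact : ∀ g x, (q (actL g x))⁻¹ * (g * q x) ∈ H)
    (hres : ∀ g x, resL g x = φ ⟨(q (actL g x))⁻¹ * (g * q x), hact g x⟩)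
    (g : G) (x : X) (hx : actL g x = x) (hrx : resL g x = 1) : g = 1 := by
  rw [hres, ← map_one φ] at hrx
  have h := congrArg Subtype.val (hφ hrx)
  simp only [hx, OneMemClass.coe_one, inv_mul_eq_one] at h
  exact mul_eq_right.mp h.symm

end VirtualEndomorphism

theorem virtualEndo_rightCancellative_general (G : Type*) [Group G] (H : Subgroup G)
    (φ : H →* G) (hφ : Function.Injective φ)
    (X : Type*) (q : X → G)
    (actL : G → X → X) (resL : G → X → G)
    (hact : ∀ g x, (q (actL g x))⁻¹ * (g * q x) ∈ H)
    (hres : ∀ g x, resL g x = φ ⟨(q (actL g x))⁻¹ * (g * q x), hact g x⟩) :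
    (∀ g : G, ∀ x : X, actL g x = x → resL g x = 1 → g = 1) ∧
    (∀ g : G, ∀ w : List X, w ≠ [] → actW actL resL g w = w →
      resW actL resL g w = 1 → g = 1) ∧
    (∀ s t u : List X × G, zsMulW actL resL s u = zsMulW actL resL t u → s = t) := by
  have hfix := eq_one_of_actL_eq_self_of_resL_eq_one hφ hact hres
  have hinj := eq_of_actL_eq_of_resL_eq hφ hact hres
  exact ⟨hfix, fun _ _ hw => eq_one_of_actW_eq_self_of_resW_eq_one hfix hw,
    fun _ _ _ => zsMulW_right_cancel hinj⟩

/-- For the self-similar action associated to an injective virtual endomorphism `φ : H → G`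
via a transversal `q : X → G`, there is no `g ≠ 1` with `g(x) = x` and `g|_x = 1`, no `g ≠ 1`
fixing a nonempty word with trivial restriction, and `X* ⋈ G` is right cancellative. -/
theorem virtualEndo_rightCancellative (G : Type*) [Group G] (H : Subgroup G)
    [H.FiniteIndex] (φ : H →* G) (hφ : Function.Injective φ)
    (X : Type*) (q : X → G)
    (htrans : ∀ g : G, ∃! y : X, (q y)⁻¹ * g ∈ H)
    (actL : G → X → X) (resL : G → X → G)
    (hact : ∀ g x, (q (actL g x))⁻¹ * (g * q x) ∈ H)
    (hres : ∀ g x, resL g x = φ ⟨(q (actL g x))⁻¹ * (g * q x), hact g x⟩) :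
    (∀ g : G, ∀ x : X, actL g x = x → resL g x = 1 → g = 1) ∧
    (∀ g : G, ∀ w : List X, w ≠ [] → actW actL resL g w = w →
      resW actL resL g w = 1 → g = 1) ∧
    (∀ s t u : List X × G, zsMulW actL resL s u = zsMulW actL resL t u → s = t) :=
  virtualEndo_rightCancellative_general G H φ hφ X q actL resL hact hres
end

section
/- For nonzero integers $c, d$ with $cd < 0$, the Baumslag–Solitar monoid $BS(c,d)^+$ has no core irreducible elements other than the identity: for every $s \in BS(c,d)^+$ with $\theta(s) > 0$ and every $n \geq 1$, there exists $t \in BS(c,d)^+$ with $t \neq s$ and $s = t\,\ib^n$. -/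
/-- The defining relation of `BS(c,d)⁺` for `cd < 0`: `b^{|d|} a b^{|c|} = a`. -/
def BSRelNeg (c d : ℤ) (x y : FreeMonoid (Fin 2)) : Prop :=
  x = FreeMonoid.of 1 ^ d.natAbs * FreeMonoid.of 0 * FreeMonoid.of 1 ^ c.natAbs ∧
    y = FreeMonoid.of 0

/-- The congruence generated by the defining relation of `BS(c,d)⁺`, `cd < 0`. -/
def BSConNeg (c d : ℤ) : Con (FreeMonoid (Fin 2)) := conGen (BSRelNeg c d)

/-- The Baumslag–Solitar monoid `BS(c,d)⁺ = ⟨a, b ∣ b^{|d|} a b^{|c|} = a⟩⁺` for `cd < 0`. -/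
abbrev BSMonoidNeg (c d : ℤ) := (BSConNeg c d).Quotient

/-- The generator `a` of `BS(c,d)⁺`. -/
def bsA (c d : ℤ) : BSMonoidNeg c d := (BSConNeg c d).mk' (FreeMonoid.of 0)

/-- The generator `b` of `BS(c,d)⁺`. -/
def bsB (c d : ℤ) : BSMonoidNeg c d := (BSConNeg c d).mk' (FreeMonoid.of 1)

/-- The defining relation holds in `BS(c,d)⁺`. -/
lemma bs_rel (c d : ℤ) :
    bsB c d ^ d.natAbs * bsA c d * bsB c d ^ c.natAbs = bsA c d := by
  unfold bsA bsB
  rw [← map_pow, ← map_pow, ← map_mul, ← map_mul]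
  exact (Con.eq _).mpr (ConGen.Rel.of _ _ ⟨rfl, rfl⟩)

/-- `a` can absorb arbitrarily many `b`'s on the right. -/
lemma bsA_eq_mul_pow (c d : ℤ) (hc : c ≠ 0) (n : ℕ) :
    ∃ u : BSMonoidNeg c d, bsA c d = u * bsB c d ^ n := by
  have hC : 1 ≤ c.natAbs := by omega
  induction n with
  | zero => exact ⟨bsA c d, by simp⟩
  | succ n ih =>
    obtain ⟨u, hu⟩ := ih
    refine ⟨bsB c d ^ d.natAbs * u * bsB c d ^ (c.natAbs - 1), ?_⟩
    have : bsA c d = bsB c d ^ d.natAbs * (u * bsB c d ^ n) * bsB c d ^ c.natAbs := by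
      rw [← hu, bs_rel]
    rw [this]
    simp only [mul_assoc, ← pow_add]
    have he : n + c.natAbs = c.natAbs - 1 + (n + 1) := by omega
    rw [he]

/-- Right multiplication by a positive power of `b` moves elements. -/
lemma bs_mul_bsB_pow_ne (c d : ℤ) (hc : c ≠ 0) (hd : d ≠ 0) (hcd : c * d < 0)
    (s : BSMonoidNeg c d) (n : ℕ) (hn : 1 ≤ n) : s * bsB c d ^ n ≠ s := by
  have hcQ : (c : ℚ) ≠ 0 := by exact_mod_cast hc
  have hr : (d : ℚ) / (c : ℚ) ≠ 0 := div_ne_zero (by exact_mod_cast hd) hcQ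
  set A : Equiv.Perm ℚ := Equiv.mulLeft₀ _ hr with hA
  set B : Equiv.Perm ℚ := Equiv.addLeft 1 with hB
  set f : FreeMonoid (Fin 2) →* Equiv.Perm ℚ :=
    FreeMonoid.lift ![A, B] with hf
  have hBpow : ∀ (k : ℕ) (x : ℚ), (B ^ k) x = k + x := by
    intro k
    induction k with
    | zero => intro x; simp
    | succ k ih =>
      intro x
      rw [pow_succ, Equiv.Perm.mul_apply, ih]
      simp [hB]
      ring
  have hkey : (d : ℚ) * (c.natAbs : ℚ) + (c : ℚ) * (d.natAbs : ℚ) = 0 := by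
    have hintz : d * |c| + c * |d| = 0 := by
      rcases mul_neg_iff.mp hcd with ⟨h1, h2⟩ | ⟨h1, h2⟩
      · rw [abs_of_pos h1, abs_of_neg h2]; ring
      · rw [abs_of_neg h1, abs_of_pos h2]; ring
    rw [Nat.cast_natAbs, Nat.cast_natAbs]
    exact_mod_cast hintz
  have hrel : ∀ x y, BSRelNeg c d x y → f x = f y := by
    rintro x y ⟨hx, hy⟩
    subst hx; subst hy
    simp only [hf, map_mul, map_pow, FreeMonoid.lift_eval_of, Matrix.cons_val_zero,
      Matrix.cons_val_one, Matrix.head_cons]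
    ext x
    rw [Equiv.Perm.mul_apply, Equiv.Perm.mul_apply, hBpow]
    simp only [hA, Equiv.mulLeft₀_apply]
    rw [hBpow]
    field_simp
    ring_nf
    nlinarith [hkey]
  have hle : BSConNeg c d ≤ Con.ker f := Con.conGen_le.mpr hrel
  set φ : BSMonoidNeg c d →* Equiv.Perm ℚ := Con.lift _ f hle with hφ
  have hφb : φ (bsB c d) = B := by
    rw [hφ, bsB, Con.lift_mk']
    simp [hf]
  intro hcontra
  have h1 : φ s * B ^ n = φ s := by
    rw [← hφb, ← map_pow, ← map_mul, hcontra]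
  have h2 : B ^ n = 1 := by
    have := mul_left_cancel (a := φ s) (b := B ^ n) (c := 1) (by rw [mul_one]; exact h1)
    exact this
  have h3 : ((B ^ n) (0 : ℚ)) = (0 : ℚ) := by rw [h2]; simp
  rw [hBpow] at h3
  have : (n : ℚ) = 0 := by linarith
  have : n = 0 := by exact_mod_cast this
  omega

/-- For `cd < 0`, the only core irreducible element of `BS(c,d)⁺` is the identity: every `s`
of positive height satisfies `s = t b^n` with `t ≠ s`, for every `n ≥ 1`. Here `θ` is the
height homomorphism (`a ↦ 1`, `b ↦ 0`). -/
theorem bs_no_core_irreducibles (c d : ℤ) (hc : c ≠ 0) (hd : d ≠ 0) (hcd : c * d < 0)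
    (θ : BSMonoidNeg c d →* Multiplicative ℤ)
    (hθa : θ (bsA c d) = Multiplicative.ofAdd 1)
    (hθb : θ (bsB c d) = 1) :
    ∀ s : BSMonoidNeg c d, 0 < Multiplicative.toAdd (θ s) →
      ∀ n : ℕ, 1 ≤ n → ∃ t : BSMonoidNeg c d, t ≠ s ∧ s = t * bsB c d ^ n := by
  intro s hs n hn
  have main : ∀ l : List (Fin 2),
      0 < Multiplicative.toAdd (θ ((BSConNeg c d).mk' (FreeMonoid.ofList l))) →
      ∃ t, (BSConNeg c d).mk' (FreeMonoid.ofList l) = t * bsB c d ^ n := by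
    intro l
    induction l using List.reverseRecOn with
    | nil =>
      intro h
      simp only [FreeMonoid.ofList_nil, map_one] at h
      simp at h
    | append_singleton l x ih =>
      intro h
      rw [FreeMonoid.ofList_append, FreeMonoid.ofList_singleton, map_mul] at h ⊢
      have hx : x = 0 ∨ x = 1 := by
        rcases x with ⟨v, hv⟩
        interval_cases v
        · left; rfl
        · right; rfl
      rcases hx with rfl | rfl
      · -- x = 0 : last letter is `a`
        obtain ⟨u, hu⟩ := bsA_eq_mul_pow c d hc n
        refine ⟨(BSConNeg c d).mk' (FreeMonoid.ofList l) * u, ?_⟩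
        show (BSConNeg c d).mk' (FreeMonoid.ofList l) * bsA c d = _
        rw [hu, mul_assoc]
      · -- x = 1 : last letter is `b`
        have hθ : θ ((BSConNeg c d).mk' (FreeMonoid.ofList l) * (BSConNeg c d).mk' (FreeMonoid.of 1))
            = θ ((BSConNeg c d).mk' (FreeMonoid.ofList l)) := by
          rw [map_mul]
          show _ * θ (bsB c d) = _
          rw [hθb, mul_one]
        rw [hθ] at h
        obtain ⟨t, ht⟩ := ih h
        refine ⟨t * bsB c d, ?_⟩
        show _ * bsB c d = _
        rw [ht, mul_assoc, mul_assoc]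
        congr 1
        rw [← pow_succ', ← pow_succ]
  obtain ⟨w, rfl⟩ := Con.mk'_surjective s
  rw [← FreeMonoid.ofList_toList w] at hs ⊢
  obtain ⟨t, ht⟩ := main (FreeMonoid.toList w) hs
  refine ⟨t, ?_, ht⟩
  intro he
  exact bs_mul_bsB_pow_ne c d hc hd hcd _ n hn (by rw [← he] at ht; exact ht.symm)
end

section
/- Let $m > 1$ and let $S_m = \langle \ia, \ib, \ic \mid \ia\ib = \ib^2,\ \ic\ia = \ia^m\ic,\ \ic\ib = \ib^m\ic \rangle^+$. Then every element of $S_m$ has a unique normal form $\ib^i \ia^j \ic^k$ with $i, j, k \in \mathbb{N}$, and two elements $s = \ib^{i_1}\ia^{j_1}\ic^{k_1}$ and $t = \ib^{i_2}\ia^{j_2}\ic^{k_2}$ have a right common multiple in $S_m$ if and only if $(i_1 + j_1) - (i_2 + j_2) \in m^{\min(k_1,k_2)}\mathbb{Z}$. -/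
/-- The defining relations of `S_m = ⟨a, b, c ∣ ab = b², ca = aᵐc, cb = bᵐc⟩⁺`
(generators: `0 ↦ a`, `1 ↦ b`, `2 ↦ c`). -/
def SmRel (m : ℕ) (x y : FreeMonoid (Fin 3)) : Prop :=
  (x = FreeMonoid.of 0 * FreeMonoid.of 1 ∧ y = FreeMonoid.of 1 * FreeMonoid.of 1) ∨
  (x = FreeMonoid.of 2 * FreeMonoid.of 0 ∧ y = FreeMonoid.of 0 ^ m * FreeMonoid.of 2) ∨
  (x = FreeMonoid.of 2 * FreeMonoid.of 1 ∧ y = FreeMonoid.of 1 ^ m * FreeMonoid.of 2)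

/-- The congruence generated by the defining relations of `S_m`. -/
def SmCon (m : ℕ) : Con (FreeMonoid (Fin 3)) := conGen (SmRel m)

/-- The monoid `S_m` of shadowed natural numbers. -/
abbrev Sm (m : ℕ) := (SmCon m).Quotient

/-- The generator `a` of `S_m`. -/
def smA (m : ℕ) : Sm m := (SmCon m).mk' (FreeMonoid.of 0)

/-- The generator `b` of `S_m`. -/
def smB (m : ℕ) : Sm m := (SmCon m).mk' (FreeMonoid.of 1)

/-- The generator `c` of `S_m`. -/
def smC (m : ℕ) : Sm m := (SmCon m).mk' (FreeMonoid.of 2)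

namespace SmAux
variable {m : ℕ}
lemma mk_rel {x y : FreeMonoid (Fin 3)} (h : SmRel m x y) :
    (SmCon m).mk' x = (SmCon m).mk' y :=
  (Con.eq _).mpr (ConGen.Rel.of _ _ h)
lemma rel_ab : smA m * smB m = smB m * smB m := by
  have h := mk_rel (m := m) (Or.inl ⟨rfl, rfl⟩); simpa [smA, smB, map_mul] using h
lemma rel_ca : smC m * smA m = smA m ^ m * smC m := by
  have h := mk_rel (m := m) (Or.inr (Or.inl ⟨rfl, rfl⟩))
  simpa [smA, smC, map_mul, map_pow] using h
lemma rel_cb : smC m * smB m = smB m ^ m * smC m := by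
  have h := mk_rel (m := m) (Or.inr (Or.inr ⟨rfl, rfl⟩))
  simpa [smB, smC, map_mul, map_pow] using h

lemma a_bpow (n : ℕ) : smA m * smB m ^ (n + 1) = smB m ^ (n + 2) := by
  calc smA m * smB m ^ (n + 1) = (smA m * smB m) * smB m ^ n := by
        rw [pow_succ', ← mul_assoc]
    _ = smB m * smB m * smB m ^ n := by rw [rel_ab]
    _ = smB m ^ (n + 2) := by rw [mul_assoc, ← pow_succ', ← pow_succ']

lemma apow_bpow (j n : ℕ) : smA m ^ j * smB m ^ (n + 1) = smB m ^ (n + 1 + j) := by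
  induction j with
  | zero => simp
  | succ j ih =>
      rw [pow_succ', mul_assoc, ih]
      have h1 : n + 1 + j = (n + j) + 1 := by omega
      have h2 : n + 1 + (j + 1) = (n + j) + 2 := by omega
      rw [h1, h2, a_bpow]

lemma c_apow (n : ℕ) : smC m * smA m ^ n = smA m ^ (n * m) * smC m := by
  induction n with
  | zero => simp
  | succ n ih =>
      rw [pow_succ, ← mul_assoc, ih, mul_assoc, rel_ca, ← mul_assoc, ← pow_add,
        Nat.succ_mul]

lemma c_bpow (n : ℕ) : smC m * smB m ^ n = smB m ^ (n * m) * smC m := by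
  induction n with
  | zero => simp
  | succ n ih =>
      rw [pow_succ, ← mul_assoc, ih, mul_assoc, rel_cb, ← mul_assoc, ← pow_add,
        Nat.succ_mul]

lemma cpow_apow (k n : ℕ) : smC m ^ k * smA m ^ n = smA m ^ (n * m ^ k) * smC m ^ k := by
  induction k with
  | zero => simp
  | succ k ih =>
      rw [pow_succ', mul_assoc, ih, ← mul_assoc, c_apow, mul_assoc, ← pow_succ',
        mul_assoc, ← pow_succ]

lemma cpow_bpow (k n : ℕ) : smC m ^ k * smB m ^ n = smB m ^ (n * m ^ k) * smC m ^ k := by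
  induction k with
  | zero => simp
  | succ k ih =>
      rw [pow_succ', mul_assoc, ih, ← mul_assoc, c_bpow, mul_assoc, ← pow_succ',
        mul_assoc, ← pow_succ]


/-- left multiplication by `a` on normal forms -/
def fa (p : ℕ × ℕ × ℕ) : ℕ × ℕ × ℕ :=
  if p.1 = 0 then (0, p.2.1 + 1, p.2.2) else (p.1 + 1, p.2.1, p.2.2)

def fb (p : ℕ × ℕ × ℕ) : ℕ × ℕ × ℕ := (p.1 + 1, p.2.1, p.2.2)

def fc (m : ℕ) (p : ℕ × ℕ × ℕ) : ℕ × ℕ × ℕ := (p.1 * m, p.2.1 * m, p.2.2 + 1)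

def F (m : ℕ) : Fin 3 → Function.End (ℕ × ℕ × ℕ)
  | 0 => fa
  | 1 => fb
  | 2 => fc m

lemma end_pow_apply (f : Function.End (ℕ × ℕ × ℕ)) (n : ℕ) (x : ℕ × ℕ × ℕ) :
    (f ^ n) x = f^[n] x := by
  induction n generalizing x with
  | zero => rfl
  | succ n ih =>
      rw [pow_succ]
      show (f ^ n) (f x) = f^[n + 1] x
      show (f ^ n) (f x) = f^[n] (f x)
      exact ih (f x)

lemma fb_iter (n i j k : ℕ) : fb^[n] (i, j, k) = (i + n, j, k) := by
  induction n with
  | zero => rfl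
  | succ n ih => rw [Function.iterate_succ_apply', ih]; simp [fb]; omega

lemma fa_iter_zero (n j k : ℕ) : fa^[n] (0, j, k) = (0, j + n, k) := by
  induction n with
  | zero => rfl
  | succ n ih => rw [Function.iterate_succ_apply', ih]; simp [fa]; omega

lemma fa_iter_pos (n i j k : ℕ) (hi : i ≠ 0) : fa^[n] (i, j, k) = (i + n, j, k) := by
  induction n with
  | zero => rfl
  | succ n ih =>
      rw [Function.iterate_succ_apply', ih]
      have h2 : i + n ≠ 0 := by omega
      simp [fa, h2, hi]
      omega

lemma fc_iter (n i j k : ℕ) : (fc m)^[n] (i, j, k) = (i * m ^ n, j * m ^ n, k + n) := by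
  induction n with
  | zero => simp
  | succ n ih => rw [Function.iterate_succ_apply', ih]; simp [fc, pow_succ, mul_assoc]; omega

lemma con_le (hm : 0 < m) : SmCon m ≤ Con.ker (FreeMonoid.lift (F m)) := by
  apply Con.conGen_le.mpr
  rintro x y (⟨rfl, rfl⟩ | ⟨rfl, rfl⟩ | ⟨rfl, rfl⟩) <;>
    simp only [Con.ker_rel, map_mul, map_pow, FreeMonoid.lift_eval_of]
  · show (F m 0 : Function.End _) * F m 1 = F m 1 * F m 1
    funext p
    obtain ⟨i, j, k⟩ := p
    show fa (fb (i, j, k)) = fb (fb (i, j, k))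
    simp [fa, fb]
  · show (F m 2 : Function.End _) * F m 0 = F m 0 ^ m * F m 2
    funext p
    obtain ⟨i, j, k⟩ := p
    show fc m (fa (i, j, k)) = (F m 0 ^ m) (fc m (i, j, k))
    rw [end_pow_apply]
    show fc m (fa (i, j, k)) = fa^[m] (i * m, j * m, k + 1)
    rcases Nat.eq_zero_or_pos i with hi | hi
    · subst hi
      simp only [Nat.zero_mul]
      rw [fa_iter_zero]
      simp [fa, fc, add_mul]
    · rw [fa_iter_pos _ _ _ _ (Nat.mul_ne_zero hi.ne' hm.ne')]
      have : i ≠ 0 := hi.ne'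
      simp [fa, fc, this, add_mul]
  · show (F m 2 : Function.End _) * F m 1 = F m 1 ^ m * F m 2
    funext p
    obtain ⟨i, j, k⟩ := p
    show fc m (fb (i, j, k)) = (F m 1 ^ m) (fc m (i, j, k))
    rw [end_pow_apply]
    show fc m (fb (i, j, k)) = fb^[m] (i * m, j * m, k + 1)
    rw [fb_iter]
    simp [fb, fc, add_mul]

/-- normal-form reading map -/
noncomputable def nf (hm : 0 < m) : Sm m →* Function.End (ℕ × ℕ × ℕ) :=
  (SmCon m).lift (FreeMonoid.lift (F m)) (con_le hm)

lemma nf_eval (hm : 0 < m) (i j k : ℕ) :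
    nf hm (smB m ^ i * smA m ^ j * smC m ^ k) (0, 0, 0) = (i, j, k) := by
  have hA : nf hm (smA m) = fa := by
    simp only [nf, smA, Con.lift_mk', FreeMonoid.lift_eval_of]; rfl
  have hB : nf hm (smB m) = fb := by
    simp only [nf, smB, Con.lift_mk', FreeMonoid.lift_eval_of]; rfl
  have hC : nf hm (smC m) = fc m := by
    simp only [nf, smC, Con.lift_mk', FreeMonoid.lift_eval_of]; rfl
  have hmul : ∀ (s t : Sm m) (x : ℕ × ℕ × ℕ), nf hm (s * t) x = nf hm s (nf hm t x) := by
    intro s t x; rw [map_mul]; rfl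
  have hpow : ∀ (s : Sm m) (n : ℕ) (x : ℕ × ℕ × ℕ), nf hm (s ^ n) x = (nf hm s)^[n] x := by
    intro s n x; rw [map_pow]; exact end_pow_apply _ n x
  rw [hmul, hmul, hpow, hpow, hpow, hA, hB, hC, fc_iter]
  simp only [Nat.zero_mul, Nat.zero_add]
  rw [fa_iter_zero, fb_iter]
  simp

lemma nf_unique (hm : 0 < m) {i j k i' j' k' : ℕ}
    (h : smB m ^ i * smA m ^ j * smC m ^ k = smB m ^ i' * smA m ^ j' * smC m ^ k') :
    i = i' ∧ j = j' ∧ k = k' := by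
  have := congrArg (fun s => nf hm s (0, 0, 0)) h
  simp only [nf_eval] at this
  exact ⟨congrArg Prod.fst this, congrArg (fun p => p.2.1) this, congrArg (fun p => p.2.2) this⟩


-- prefix-form rewriting lemmas (right-associated)
lemma pBB (a b : ℕ) (x : Sm m) : smB m ^ a * (smB m ^ b * x) = smB m ^ (a + b) * x := by
  rw [← mul_assoc, ← pow_add]

lemma pAA (a b : ℕ) (x : Sm m) : smA m ^ a * (smA m ^ b * x) = smA m ^ (a + b) * x := by
  rw [← mul_assoc, ← pow_add]

lemma pAB (j n : ℕ) (x : Sm m) : smA m ^ j * (smB m ^ (n + 1) * x) = smB m ^ (n + 1 + j) * x := by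
  rw [← mul_assoc, apow_bpow]

lemma pCB (k n : ℕ) (x : Sm m) :
    smC m ^ k * (smB m ^ n * x) = smB m ^ (n * m ^ k) * (smC m ^ k * x) := by
  rw [← mul_assoc, cpow_bpow, mul_assoc]

lemma pCA (k n : ℕ) (x : Sm m) :
    smC m ^ k * (smA m ^ n * x) = smA m ^ (n * m ^ k) * (smC m ^ k * x) := by
  rw [← mul_assoc, cpow_apow, mul_assoc]

lemma gen_mul_nf (hm : 0 < m) (g : Fin 3) (i j k : ℕ) :
    ∃ i' j' k' : ℕ,
      (SmCon m).mk' (FreeMonoid.of g) * (smB m ^ i * smA m ^ j * smC m ^ k)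
        = smB m ^ i' * smA m ^ j' * smC m ^ k' := by
  fin_cases g
  · -- a
    rcases i with _ | s
    · refine ⟨0, j + 1, k, ?_⟩
      show smA m * (smB m ^ 0 * smA m ^ j * smC m ^ k) = _
      simp only [pow_zero, one_mul, mul_assoc]
      rw [← mul_assoc, ← pow_succ']
    · refine ⟨s + 2, j, k, ?_⟩
      show smA m * (smB m ^ (s + 1) * smA m ^ j * smC m ^ k) = _
      simp only [mul_assoc]
      have h1 : smA m * (smB m ^ (s + 1) * (smA m ^ j * smC m ^ k))
          = smA m ^ 1 * (smB m ^ (s + 1) * (smA m ^ j * smC m ^ k)) := by rw [pow_one]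
      rw [h1, pAB]
  · -- b
    refine ⟨i + 1, j, k, ?_⟩
    show smB m * (smB m ^ i * smA m ^ j * smC m ^ k) = _
    simp only [mul_assoc]
    rw [← mul_assoc, ← pow_succ']
  · -- c
    refine ⟨i * m, j * m, k + 1, ?_⟩
    show smC m * (smB m ^ i * smA m ^ j * smC m ^ k) = _
    simp only [mul_assoc]
    have h1 : smC m * (smB m ^ i * (smA m ^ j * smC m ^ k))
        = smC m ^ 1 * (smB m ^ i * (smA m ^ j * smC m ^ k)) := by rw [pow_one]
    rw [h1, pCB, pCA, ← pow_add, Nat.add_comm 1 k]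
    norm_num

lemma exists_nf (hm : 0 < m) (s : Sm m) :
    ∃ i j k : ℕ, s = smB m ^ i * smA m ^ j * smC m ^ k := by
  obtain ⟨w, rfl⟩ := Con.mk'_surjective (c := SmCon m) s
  induction w using FreeMonoid.inductionOn' with
  | one => exact ⟨0, 0, 0, by simp⟩
  | of_mul x xs ih =>
      obtain ⟨i, j, k, h⟩ := ih
      obtain ⟨i', j', k', h'⟩ := gen_mul_nf hm x i j k
      exact ⟨i', j', k', by rw [map_mul, h, h']⟩

/-- multiplication of normal forms: the key sum formula -/
lemma mul_nf (hm : 0 < m) (i₁ j₁ k₁ i j k : ℕ) :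
    ∃ I J : ℕ, I + J = i₁ + j₁ + (i + j) * m ^ k₁ ∧
      (smB m ^ i₁ * smA m ^ j₁ * smC m ^ k₁) * (smB m ^ i * smA m ^ j * smC m ^ k)
        = smB m ^ I * smA m ^ J * smC m ^ (k₁ + k) := by
  have key : (smB m ^ i₁ * smA m ^ j₁ * smC m ^ k₁) * (smB m ^ i * smA m ^ j * smC m ^ k)
      = smB m ^ i₁ * (smA m ^ j₁ * (smB m ^ (i * m ^ k₁)
          * (smA m ^ (j * m ^ k₁) * smC m ^ (k₁ + k)))) := by
    simp only [mul_assoc]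
    rw [pCB, pCA, ← pow_add]
  rcases Nat.eq_zero_or_pos i with hi | hi
  · subst hi
    refine ⟨i₁, j₁ + j * m ^ k₁, by ring, ?_⟩
    rw [key]
    simp only [Nat.zero_mul, pow_zero, one_mul]
    rw [pAA]
    simp only [mul_assoc]
  · obtain ⟨s, hs⟩ : ∃ s, i * m ^ k₁ = s + 1 :=
      ⟨i * m ^ k₁ - 1, by
        have : 0 < i * m ^ k₁ := Nat.mul_pos hi (pow_pos hm k₁)
        omega⟩
    refine ⟨i₁ + (i * m ^ k₁ + j₁), j * m ^ k₁, by ring, ?_⟩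
    rw [key, hs, pAB, pBB]
    have : i₁ + (s + 1 + j₁) = i₁ + (i * m ^ k₁ + j₁) := by omega
    rw [this]
    simp only [mul_assoc]


lemma mul_bc (hm : 0 < m) (i j k u k' : ℕ) (hu : 0 < u) :
    (smB m ^ i * smA m ^ j * smC m ^ k) * (smB m ^ u * smC m ^ k')
      = smB m ^ (i + u * m ^ k + j) * smC m ^ (k + k') := by
  obtain ⟨t, ht⟩ : ∃ t, u * m ^ k = t + 1 :=
    ⟨u * m ^ k - 1, by have : 0 < u * m ^ k := Nat.mul_pos hu (pow_pos hm k); omega⟩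
  simp only [mul_assoc]
  rw [pCB, ← pow_add, ht, pAB, pBB]
  congr 2
  omega

lemma arith (hm : 1 < m) {k₁ k₂ : ℕ} (hk : k₁ ≤ k₂) (A B : ℕ)
    (h : (m : ℤ) ^ k₁ ∣ (A : ℤ) - B) :
    ∃ u v : ℕ, 0 < u ∧ 0 < v ∧ A + u * m ^ k₁ = B + v * m ^ k₂ := by
  obtain ⟨e, he⟩ := h
  have hm1 : (1 : ℤ) ≤ (m : ℤ) := by exact_mod_cast hm.le
  have hpow : (1 : ℤ) ≤ (m : ℤ) ^ (k₂ - k₁) := by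
    induction (k₂ - k₁) with
    | zero => simp
    | succ n ih => rw [pow_succ]; nlinarith
  set v : ℕ := e.natAbs + 1 with hv
  have hvpos : 0 < v := Nat.succ_pos _
  have hvle : e ≤ (v : ℤ) - 1 := by
    have h1 : e ≤ |e| := le_abs_self e
    rw [Int.abs_eq_natAbs] at h1
    have h3 : ((v : ℕ) : ℤ) = (e.natAbs : ℤ) + 1 := by rw [hv]; push_cast; ring
    omega
  have hE : (1 : ℤ) ≤ -e + v * (m : ℤ) ^ (k₂ - k₁) := by
    have h3 : (v : ℤ) * 1 ≤ (v : ℤ) * (m : ℤ) ^ (k₂ - k₁) :=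
      mul_le_mul_of_nonneg_left hpow (by positivity)
    nlinarith [hvle]
  set u : ℕ := (-e + v * (m : ℤ) ^ (k₂ - k₁)).toNat with hu
  have hu' : (u : ℤ) = -e + v * (m : ℤ) ^ (k₂ - k₁) := Int.toNat_of_nonneg (by linarith)
  have hupos : 0 < u := by
    have : (1 : ℤ) ≤ (u : ℤ) := by rw [hu']; exact hE
    exact_mod_cast this
  refine ⟨u, v, hupos, hvpos, ?_⟩
  have hpows : (m : ℤ) ^ (k₂ - k₁) * (m : ℤ) ^ k₁ = (m : ℤ) ^ k₂ := by
    rw [← pow_add, Nat.sub_add_cancel hk]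
  have hZ : (A : ℤ) + u * (m : ℤ) ^ k₁ = B + v * (m : ℤ) ^ k₂ := by
    calc (A : ℤ) + u * (m : ℤ) ^ k₁
        = A + (-e + v * (m : ℤ) ^ (k₂ - k₁)) * (m : ℤ) ^ k₁ := by rw [hu']
      _ = (A - (m : ℤ) ^ k₁ * e) + v * ((m : ℤ) ^ (k₂ - k₁) * (m : ℤ) ^ k₁) := by ring
      _ = (A - ((A : ℤ) - B)) + v * (m : ℤ) ^ k₂ := by rw [hpows, ← he]
      _ = B + v * (m : ℤ) ^ k₂ := by ring
  exact_mod_cast hZ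

end SmAux


/-- Every element of `S_m` has a unique normal form `bⁱ aʲ cᵏ`, and two elements in normal
form admit a right common multiple iff `(i₁+j₁) - (i₂+j₂) ∈ m^{min(k₁,k₂)} ℤ`. -/
theorem sm_normal_form_and_rcm (m : ℕ) (hm : 1 < m) :
    (∀ s : Sm m, ∃! p : ℕ × ℕ × ℕ,
      s = smB m ^ p.1 * smA m ^ p.2.1 * smC m ^ p.2.2) ∧
    (∀ i₁ j₁ k₁ i₂ j₂ k₂ : ℕ,
      (∃ x y : Sm m,
        smB m ^ i₁ * smA m ^ j₁ * smC m ^ k₁ * x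
          = smB m ^ i₂ * smA m ^ j₂ * smC m ^ k₂ * y) ↔
      (m : ℤ) ^ min k₁ k₂ ∣ ((i₁ : ℤ) + j₁) - ((i₂ : ℤ) + j₂)) := by
  have hm0 : 0 < m := by omega
  constructor
  · intro s
    obtain ⟨i, j, k, hs⟩ := SmAux.exists_nf hm0 s
    refine ⟨(i, j, k), hs, ?_⟩
    rintro ⟨i', j', k'⟩ h'
    obtain ⟨e1, e2, e3⟩ := SmAux.nf_unique hm0 (h'.symm.trans hs)
    simp only [Prod.mk.injEq]
    exact ⟨e1, e2, e3⟩
  · intro i₁ j₁ k₁ i₂ j₂ k₂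
    constructor
    · rintro ⟨x, y, hxy⟩
      obtain ⟨i, j, k, hx⟩ := SmAux.exists_nf hm0 x
      obtain ⟨i', j', k', hy⟩ := SmAux.exists_nf hm0 y
      obtain ⟨I, J, hIJ, hmulx⟩ := SmAux.mul_nf hm0 i₁ j₁ k₁ i j k
      obtain ⟨I', J', hIJ', hmuly⟩ := SmAux.mul_nf hm0 i₂ j₂ k₂ i' j' k'
      rw [hx, hmulx, hy, hmuly] at hxy
      obtain ⟨eI, eJ, eK⟩ := SmAux.nf_unique hm0 hxy
      have hsum : i₁ + j₁ + (i + j) * m ^ k₁ = i₂ + j₂ + (i' + j') * m ^ k₂ := by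
        rw [← hIJ, ← hIJ', eI, eJ]
      have hZ : ((i₁ : ℤ) + j₁) - ((i₂ : ℤ) + j₂)
          = ((i' : ℤ) + j') * (m : ℤ) ^ k₂ - ((i : ℤ) + j) * (m : ℤ) ^ k₁ := by
        have hc := congrArg (fun n : ℕ => (n : ℤ)) hsum
        push_cast at hc
        linarith
      rw [hZ]
      have d1 : (m : ℤ) ^ min k₁ k₂ ∣ ((i : ℤ) + j) * (m : ℤ) ^ k₁ :=
        Dvd.dvd.mul_left (pow_dvd_pow _ (min_le_left _ _)) _
      have d2 : (m : ℤ) ^ min k₁ k₂ ∣ ((i' : ℤ) + j') * (m : ℤ) ^ k₂ :=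
        Dvd.dvd.mul_left (pow_dvd_pow _ (min_le_right _ _)) _
      exact dvd_sub d2 d1
    · intro hdvd
      rcases le_total k₁ k₂ with hk | hk
      · have hdvd' : (m : ℤ) ^ k₁ ∣ ((i₁ + j₁ : ℕ) : ℤ) - ((i₂ + j₂ : ℕ) : ℤ) := by
          rw [min_eq_left hk] at hdvd
          push_cast
          exact hdvd
        obtain ⟨u, v, hu, hv, heq⟩ := SmAux.arith hm hk (i₁ + j₁) (i₂ + j₂) hdvd'
        refine ⟨smB m ^ u * smC m ^ k₂, smB m ^ v * smC m ^ k₁, ?_⟩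
        rw [SmAux.mul_bc hm0 _ _ _ _ _ hu, SmAux.mul_bc hm0 _ _ _ _ _ hv]
        have e1 : i₁ + u * m ^ k₁ + j₁ = i₂ + v * m ^ k₂ + j₂ := by
          generalize hP : u * m ^ k₁ = P at heq ⊢
          generalize hQ : v * m ^ k₂ = Q at heq ⊢
          omega
        rw [e1, Nat.add_comm k₁ k₂]
      · have hdvd' : (m : ℤ) ^ k₂ ∣ ((i₂ + j₂ : ℕ) : ℤ) - ((i₁ + j₁ : ℕ) : ℤ) := by
          rw [min_eq_right hk] at hdvd
          push_cast
          exact (dvd_sub_comm).mp hdvd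
        obtain ⟨u, v, hu, hv, heq⟩ := SmAux.arith hm hk (i₂ + j₂) (i₁ + j₁) hdvd'
        refine ⟨smB m ^ v * smC m ^ k₂, smB m ^ u * smC m ^ k₁, ?_⟩
        rw [SmAux.mul_bc hm0 _ _ _ _ _ hv, SmAux.mul_bc hm0 _ _ _ _ _ hu]
        have e1 : i₁ + v * m ^ k₁ + j₁ = i₂ + u * m ^ k₂ + j₂ := by
          generalize hP : v * m ^ k₁ = P at heq ⊢
          generalize hQ : u * m ^ k₂ = Q at heq ⊢
          omega
        rw [e1, Nat.add_comm k₁ k₂]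
end

section
/- Let $m > 1$ and let $S_m = \langle \ia, \ib, \ic \mid \ia\ib = \ib^2,\ \ic\ia = \ia^m\ic,\ \ic\ib = \ib^m\ic \rangle^+$ with core $S_c = \langle \ia, \ib \rangle$ and core equivalence: $\ib^{i_1}\ia^{j_1}\ic^{k_1} \sim \ib^{i_2}\ia^{j_2}\ic^{k_2}$ iff $k_1 = k_2$ and $i_1 + j_1 \equiv i_2 + j_2 \pmod{m^{k_1}}$. Then for any $a = \ib^{i_1}\ia^{j_1}$ and $b = \ib^{i_2}\ia^{j_2}$ in $S_c$ with $i_1 + j_1 = i_2 + j_2$, and any $s \in S_m$ with normal form containing $\ic^k$, one has $a s \ib = b s \ib$; hence $[s]$ is an absorbing fixed point for the pair $(a,b)$ for every class $[s]$, i.e., $A_{m^k}^{a,b} = F_{m^k}^{a,b} = N^{-1}(m^k)/_\sim$. -/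
section SmAux

lemma smRel_ab (m : ℕ) :
    SmCon m (FreeMonoid.of 0 * FreeMonoid.of 1) (FreeMonoid.of 1 * FreeMonoid.of 1) :=
  ConGen.Rel.of _ _ (Or.inl ⟨rfl, rfl⟩)

lemma smRel_cb (m : ℕ) :
    SmCon m (FreeMonoid.of 2 * FreeMonoid.of 1) (FreeMonoid.of 1 ^ m * FreeMonoid.of 2) :=
  ConGen.Rel.of _ _ (Or.inr (Or.inr ⟨rfl, rfl⟩))

open FreeMonoid in
lemma smKey1 (m : ℕ) (hm : 1 < m) (w : FreeMonoid (Fin 3)) :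
    SmCon m (of 0 * w * of 1) (of 1 * w * of 1) := by
  obtain ⟨m', rfl⟩ : ∃ m', m = m' + 1 := ⟨m - 1, by omega⟩
  set c := SmCon (m' + 1) with hc
  rw [← ofList_toList w]
  induction (toList w) using List.reverseRecOn with
  | nil =>
    simpa using smRel_ab (m' + 1)
  | append_singleton l x ih =>
    rw [ofList_append, ofList_singleton]
    set L := ofList l
    fin_cases x
    · have h1 : c (of 0 * L * (of 0 * of 1)) (of 0 * L * (of 1 * of 1)) :=
        c.mul (c.refl (of 0 * L)) (smRel_ab _)
      have h2 : c (of 0 * L * of 1 * of 1) (of 1 * L * of 1 * of 1) :=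
        c.mul ih (c.refl (of 1))
      have h3 : c (of 1 * L * (of 1 * of 1)) (of 1 * L * (of 0 * of 1)) :=
        c.mul (c.refl (of 1 * L)) (c.symm (smRel_ab _))
      simp only [mul_assoc] at h1 h2 h3 ⊢
      exact c.trans (c.trans h1 h2) h3
    · have h : c ((of 0 * L * of 1) * of 1) ((of 1 * L * of 1) * of 1) :=
        c.mul ih (c.refl _)
      simpa [mul_assoc] using h
    · have h1 : c (of 0 * L * (of 2 * of 1)) (of 0 * L * (of 1 ^ (m' + 1) * of 2)) :=
        c.mul (c.refl (of 0 * L)) (smRel_cb _)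
      have h2 : c ((of 0 * L * of 1) * (of 1 ^ m' * of 2))
          ((of 1 * L * of 1) * (of 1 ^ m' * of 2)) :=
        c.mul ih (c.refl _)
      have h3 : c (of 1 * L * (of 1 ^ (m' + 1) * of 2)) (of 1 * L * (of 2 * of 1)) :=
        c.mul (c.refl (of 1 * L)) (c.symm (smRel_cb _))
      simp only [mul_assoc, pow_succ'] at h1 h2 h3 ⊢
      exact c.trans (c.trans h1 h2) h3

open FreeMonoid in
lemma smKey2 (m : ℕ) (hm : 1 < m) (w : FreeMonoid (Fin 3)) :
    ∃ x, SmCon m (w * of 1) (of 1 * x) := by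
  obtain ⟨m', rfl⟩ : ∃ m', m = m' + 1 := ⟨m - 1, by omega⟩
  set c := SmCon (m' + 1) with hc
  induction w using FreeMonoid.recOn with
  | one => exact ⟨1, by simpa using c.refl (of 1)⟩
  | of_mul x w ih =>
    obtain ⟨y, hy⟩ := ih
    fin_cases x
    · refine ⟨of 1 * y, ?_⟩
      have h1 : c (of 0 * (w * of 1)) (of 0 * (of 1 * y)) := c.mul (c.refl _) hy
      have h2 : c ((of 0 * of 1) * y) ((of 1 * of 1) * y) := c.mul (smRel_ab _) (c.refl y)
      simp only [mul_assoc] at h1 h2 ⊢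
      exact c.trans h1 h2
    · exact ⟨w * of 1, by simpa [mul_assoc] using c.refl (of 1 * (w * of 1))⟩
    · refine ⟨of 1 ^ m' * of 2 * y, ?_⟩
      have h1 : c (of 2 * (w * of 1)) (of 2 * (of 1 * y)) := c.mul (c.refl _) hy
      have h2 : c ((of 2 * of 1) * y) ((of 1 ^ (m' + 1) * of 2) * y) :=
        c.mul (smRel_cb _) (c.refl y)
      simp only [mul_assoc, pow_succ'] at h1 h2 ⊢
      exact c.trans h1 h2

lemma smQ1 (m : ℕ) (hm : 1 < m) (s : Sm m) :
    smA m * s * smB m = smB m * s * smB m := by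
  induction s using Con.induction_on with
  | _ w => exact ((SmCon m).eq).mpr (smKey1 m hm w)

lemma smQ2 (m : ℕ) (hm : 1 < m) (s : Sm m) :
    ∃ x, s * smB m = smB m * x := by
  induction s using Con.induction_on with
  | _ w =>
    obtain ⟨x, hx⟩ := smKey2 m hm w
    exact ⟨(SmCon m).mk' x, ((SmCon m).eq).mpr hx⟩

lemma smB_mem_core (m : ℕ) (hm : 1 < m) : smB m ∈ core (Sm m) := by
  intro s
  obtain ⟨x, hx⟩ := smQ2 m hm s
  exact ⟨s * smB m, ⟨x, hx⟩, ⟨smB m, rfl⟩⟩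

lemma smQ3 (m : ℕ) (hm : 1 < m) (j : ℕ) (s : Sm m) :
    smA m ^ j * s * smB m = smB m ^ j * s * smB m := by
  induction j generalizing s with
  | zero => simp
  | succ j ih =>
    calc smA m ^ (j + 1) * s * smB m = smA m * (smA m ^ j * s) * smB m := by
          simp [pow_succ', mul_assoc]
    _ = smB m * (smA m ^ j * s) * smB m := smQ1 m hm _
    _ = smB m * (smA m ^ j * s * smB m) := by rw [mul_assoc]
    _ = smB m * (smB m ^ j * s * smB m) := by rw [ih]
    _ = smB m ^ (j + 1) * s * smB m := by rw [pow_succ']; simp [mul_assoc]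

lemma smMain (m : ℕ) (hm : 1 < m) (i₁ j₁ i₂ j₂ : ℕ) (hsum : i₁ + j₁ = i₂ + j₂)
    (s : Sm m) :
    smB m ^ i₁ * smA m ^ j₁ * s * smB m = smB m ^ i₂ * smA m ^ j₂ * s * smB m := by
  have h : ∀ i j : ℕ, smB m ^ i * smA m ^ j * s * smB m = smB m ^ (i + j) * s * smB m := by
    intro i j
    calc smB m ^ i * smA m ^ j * s * smB m = smB m ^ i * (smA m ^ j * s * smB m) := by
          simp [mul_assoc]
    _ = smB m ^ i * (smB m ^ j * s * smB m) := by rw [smQ3 m hm]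
    _ = smB m ^ (i + j) * s * smB m := by rw [pow_add]; simp [mul_assoc]
  rw [h, h, hsum]

end SmAux

/-- In `S_m`, for core elements `a = b^{i₁}a^{j₁}` and `b = b^{i₂}a^{j₂}` with
`i₁+j₁ = i₂+j₂`, one has `a s b = b s b` for every `s`; hence every class at level `m^k`
is an absorbing fixed point: `A_{m^k}^{a,b} = F_{m^k}^{a,b} = N⁻¹(m^k)/∼`. -/
theorem sm_all_classes_absorbing (m : ℕ) (hm : 1 < m)
    (N : Sm m →* ℕ) (hNa : N (smA m) = 1) (hNb : N (smB m) = 1) (hNc : N (smC m) = m)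
    (i₁ j₁ i₂ j₂ : ℕ) (hsum : i₁ + j₁ = i₂ + j₂) :
    (∀ s : Sm m,
      smB m ^ i₁ * smA m ^ j₁ * s * smB m = smB m ^ i₂ * smA m ^ j₂ * s * smB m) ∧
    (∀ k : ℕ,
      Aset ⇑N (smB m ^ i₁ * smA m ^ j₁) (smB m ^ i₂ * smA m ^ j₂) (m ^ k)
        = Fset ⇑N (smB m ^ i₁ * smA m ^ j₁) (smB m ^ i₂ * smA m ^ j₂) (m ^ k) ∧
      Fset ⇑N (smB m ^ i₁ * smA m ^ j₁) (smB m ^ i₂ * smA m ^ j₂) (m ^ k)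
        = classSet ⇑N (m ^ k)) := by
  have eqm := smMain m hm i₁ j₁ i₂ j₂ hsum
  have habs : ∀ s : Sm m,
      Absorbing (smB m ^ i₁ * smA m ^ j₁) (smB m ^ i₂ * smA m ^ j₂) s :=
    fun s => ⟨smB m, smB_mem_core m hm, eqm s⟩
  have hfix : ∀ s : Sm m,
      FixedBy (smB m ^ i₁ * smA m ^ j₁) (smB m ^ i₂ * smA m ^ j₂) s :=
    fun s => ⟨smB m, smB_mem_core m hm, smB m, smB_mem_core m hm, eqm s⟩
  refine ⟨eqm, fun k => ?_⟩
  have hA : Aset ⇑N (smB m ^ i₁ * smA m ^ j₁) (smB m ^ i₂ * smA m ^ j₂) (m ^ k)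
      = classSet ⇑N (m ^ k) := by
    ext C
    constructor
    · rintro ⟨s, h1, -, h2⟩
      exact ⟨s, h1, h2⟩
    · rintro ⟨s, h1, h2⟩
      exact ⟨s, h1, habs s, h2⟩
  have hF : Fset ⇑N (smB m ^ i₁ * smA m ^ j₁) (smB m ^ i₂ * smA m ^ j₂) (m ^ k)
      = classSet ⇑N (m ^ k) := by
    ext C
    constructor
    · rintro ⟨s, h1, -, h2⟩
      exact ⟨s, h1, h2⟩
    · rintro ⟨s, h1, h2⟩
      exact ⟨s, h1, hfix s, h2⟩
  exact ⟨hA.trans hF.symm, hF⟩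
end
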